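/- arXiv:1901.05206 — 3 statements merged into one kernel-verified Lean document; each statement's English description precedes it below -/
import Mathlib

section
/- Let m ≥ 1 and let α, β : [a,b] → [0,1]^m be continuous maps with all coordinates non-decreasing, such that (a) α(a) = β(a) = 0, (b) α(b) = β(b) and every coordinate of α(b) lies strictly between 0 and 1, and (c) for every t ∈ [a,b], the finite sequence (α¹(t),…,α^m(t)) with all zero entries removed equals the sequence (β¹(t),…,β^m(t)) with all zero entries removed. Then α = β. -/
/-- Key analytic lemma: if `f` is monotone nonneg continuous, `g` continuous with
`g b ≠ 0`, and `f = g` wherever both are nonzero, then `f t ≠ 0 → g t ≠ 0`. -/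
lemma aux_pos (a b : ℝ) (f g : ℝ → ℝ)
    (hfc : ContinuousOn f (Set.Icc a b)) (hgc : ContinuousOn g (Set.Icc a b))
    (hfm : MonotoneOn f (Set.Icc a b))
    (hfnn : ∀ t ∈ Set.Icc a b, 0 ≤ f t)
    (hgb : g b ≠ 0)
    (heq : ∀ t ∈ Set.Icc a b, f t ≠ 0 → g t ≠ 0 → f t = g t) :
    ∀ t ∈ Set.Icc a b, f t ≠ 0 → g t ≠ 0 := by
  intro t ht hft hgt
  have hftpos : 0 < f t := (hfnn t ht).lt_of_ne (Ne.symm hft)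
  set C : Set ℝ := Set.Icc a b ∩ g ⁻¹' {0} with hC
  have hCne : C.Nonempty := ⟨t, ht, hgt⟩
  have hCclosed : IsClosed C := by
    rcases hgc.preimage_isClosed_of_isClosed isClosed_Icc isClosed_singleton with h
    exact h
  have hCcpt : IsCompact C := isCompact_Icc.of_isClosed_subset hCclosed Set.inter_subset_left
  set c : ℝ := sSup C with hc
  have hcC : c ∈ C := hCcpt.sSup_mem hCne
  have hcI : c ∈ Set.Icc a b := hcC.1
  have hgc0 : g c = 0 := hcC.2
  have htc : t ≤ c := le_csSup hCcpt.bddAbove ⟨ht, hgt⟩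
  have hcb : c < b := lt_of_le_of_ne hcI.2 (fun h => hgb (h ▸ hgc0))
  have hsub : Set.Ioc c b ⊆ Set.Icc a b := fun s hs => ⟨hcI.1.trans hs.1.le, hs.2⟩
  have heq2 : ∀ s ∈ Set.Ioc c b, f s = g s := by
    intro s hs
    have hsI : s ∈ Set.Icc a b := hsub hs
    have hgs : g s ≠ 0 := fun h0 =>
      absurd (le_csSup hCcpt.bddAbove ⟨hsI, h0⟩) (not_le.2 hs.1)
    have hfs : f s ≠ 0 :=
      ne_of_gt (lt_of_lt_of_le hftpos (hfm ht hsI (htc.trans hs.1.le)))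
    exact heq s hsI hfs hgs
  haveI : (nhdsWithin c (Set.Ioc c b)).NeBot := by
    rw [nhdsWithin_Ioc_eq_nhdsGT hcb]
    infer_instance
  have h1 : Filter.Tendsto f (nhdsWithin c (Set.Ioc c b)) (nhds (f c)) :=
    (hfc c hcI).mono hsub
  have h2 : Filter.Tendsto g (nhdsWithin c (Set.Ioc c b)) (nhds (g c)) :=
    (hgc c hcI).mono hsub
  have heq' : f =ᶠ[nhdsWithin c (Set.Ioc c b)] g :=
    Filter.eventually_iff_exists_mem.2 ⟨Set.Ioc c b, self_mem_nhdsWithin, heq2⟩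
  have hfcgc : f c = g c := tendsto_nhds_unique (h1.congr' heq') h2
  have hfcpos : 0 < f c := lt_of_lt_of_le hftpos (hfm ht hcI htc)
  exact absurd (hfcgc.trans hgc0) (ne_of_gt hfcpos)

open Classical in
/-- Let `α, β : [a,b] → [0,1]^m` be continuous maps with non-decreasing
coordinates such that (a) `α a = β a = 0`, (b) `α b = β b` with all
coordinates of `α b` strictly between `0` and `1`, and (c) for every `t`,
the sequence of coordinates of `α t` with the zero entries removed equals
that of `β t`.  Then `α = β` on `[a,b]`. -/
theorem eq_of_presentations (m : ℕ) (hm : 1 ≤ m) (a b : ℝ) (hab : a ≤ b)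
    (α β : ℝ → Fin m → ℝ)
    (hαc : ∀ j, ContinuousOn (fun t => α t j) (Set.Icc a b))
    (hβc : ∀ j, ContinuousOn (fun t => β t j) (Set.Icc a b))
    (hαm : ∀ j, MonotoneOn (fun t => α t j) (Set.Icc a b))
    (hβm : ∀ j, MonotoneOn (fun t => β t j) (Set.Icc a b))
    (hαr : ∀ t ∈ Set.Icc a b, ∀ j, α t j ∈ Set.Icc (0 : ℝ) 1)
    (hβr : ∀ t ∈ Set.Icc a b, ∀ j, β t j ∈ Set.Icc (0 : ℝ) 1)
    (hα0 : ∀ j, α a j = 0) (hβ0 : ∀ j, β a j = 0)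
    (hend : ∀ j, α b j = β b j)
    (hint : ∀ j, 0 < α b j ∧ α b j < 1)
    (hfil : ∀ t ∈ Set.Icc a b,
      (List.ofFn fun j => α t j).filter (fun x => decide (x ≠ 0)) =
        (List.ofFn fun j => β t j).filter (fun x => decide (x ≠ 0))) :
    ∀ t ∈ Set.Icc a b, ∀ j, α t j = β t j := by
  have hbI : b ∈ Set.Icc a b := ⟨hab, le_refl b⟩
  suffices H : ∀ J : ℕ, ∀ t ∈ Set.Icc a b, ∀ j : Fin m, (j : ℕ) < J → α t j = β t j by
    intro t ht j; exact H m t ht j j.isLt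
  intro J
  induction J with
  | zero => intro t ht j h; exact absurd h (Nat.not_lt_zero _)
  | succ J ih =>
    by_cases hJm : J < m
    · set j0 : Fin m := ⟨J, hJm⟩ with hj0
      -- membership in the take is index < J
      have hmemtake : ∀ i : Fin m, i ∈ (List.finRange m).take J → (i : ℕ) < J := by
        intro i hi
        obtain ⟨k, hk, hky⟩ := List.mem_iff_getElem.1 hi
        rw [List.length_take, List.length_finRange] at hk
        rw [List.getElem_take, List.getElem_finRange] at hky
        have : (i : ℕ) = k := by rw [← hky]; simp
        omega
      -- tail filter equality
      have tfe : ∀ t ∈ Set.Icc a b,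
          (((List.finRange m).drop J).map (α t)).filter (fun x => decide (x ≠ 0)) =
          (((List.finRange m).drop J).map (β t)).filter (fun x => decide (x ≠ 0)) := by
        intro t ht
        have h := hfil t ht
        rw [show (List.ofFn fun j => α t j) = List.map (α t) (List.finRange m) from
              List.ofFn_eq_map,
            show (List.ofFn fun j => β t j) = List.map (β t) (List.finRange m) from
              List.ofFn_eq_map,
            ← List.take_append_drop J (List.finRange m)] at h
        simp only [List.map_append, List.filter_append] at h
        have hpre : List.map (α t) ((List.finRange m).take J)
            = List.map (β t) ((List.finRange m).take J) :=
          List.map_congr_left (fun i hi => ih t ht i (hmemtake i hi))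
        rw [hpre] at h
        exact List.append_cancel_left h
      have hdrop : (List.finRange m).drop J = j0 :: (List.finRange m).drop (J + 1) := by
        rw [List.drop_eq_getElem_cons (by simpa using hJm)]
        congr 1
        rw [List.getElem_finRange]
        rfl
      -- heads equal when both nonzero
      have head : ∀ t ∈ Set.Icc a b, α t j0 ≠ 0 → β t j0 ≠ 0 → α t j0 = β t j0 := by
        intro t ht h1 h2
        have h := tfe t ht
        rw [hdrop] at h
        simp [List.filter_cons, h1, h2] at h
        exact h.1
      have hαb : α b j0 ≠ 0 := ne_of_gt (hint j0).1
      have hβb : β b j0 ≠ 0 := by rw [← hend j0]; exact hαb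
      have dir1 : ∀ t ∈ Set.Icc a b, α t j0 ≠ 0 → β t j0 ≠ 0 :=
        aux_pos a b (fun t => α t j0) (fun t => β t j0) (hαc j0) (hβc j0) (hαm j0)
          (fun t ht => (hαr t ht j0).1) hβb head
      have dir2 : ∀ t ∈ Set.Icc a b, β t j0 ≠ 0 → α t j0 ≠ 0 :=
        aux_pos a b (fun t => β t j0) (fun t => α t j0) (hβc j0) (hαc j0) (hβm j0)
          (fun t ht => (hβr t ht j0).1) hαb (fun t ht h2 h1 => (head t ht h1 h2).symm)
      intro t ht j hj
      rcases Nat.lt_succ_iff_lt_or_eq.1 hj with hlt | heqJ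
      · exact ih t ht j hlt
      · have hjj0 : j = j0 := Fin.ext heqJ
        rw [hjj0]
        by_cases hz : α t j0 = 0
        · have hz2 : β t j0 = 0 := by
            by_contra hne
            exact dir2 t ht hne hz
          rw [hz, hz2]
        · exact head t ht hz (dir1 t ht hz)
    · intro t ht j hj
      exact ih t ht j (by omega)
end

section
/- Let R : [0,n] × [0,1] → [0,1] be continuous, non-decreasing in each variable, with R(t,0) = 0 and R(t,1) = 1 for all t, and suppose that for every h ∈ [0,1] the support {t ∈ [0,n] : 0 < R(t,h) < 1} is an interval of length at most 1/(4n). Then for every non-decreasing continuous α : [0,n] → [0,1] with α(0) = 0 and α(n) = 1, the set {t ∈ [0,n] : 0 < R(t,α(t)) < 1} is contained in an interval of length at most 1/(4n). -/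
/-- Let `R : [0,n] × [0,1] → [0,1]` be continuous, non-decreasing in each
variable, with `R(t,0) = 0`, `R(t,1) = 1`, and such that for every `h` the
support `{t : 0 < R(t,h) < 1}` is an interval of length at most `1/(4n)`.
Then for every non-decreasing continuous `α : [0,n] → [0,1]` with `α 0 = 0`
and `α n = 1`, the set `{t : 0 < R(t,α(t)) < 1}` is contained in an interval
of length at most `1/(4n)`. -/
theorem support_of_reparametrized_small (n : ℕ) (hn : 0 < n) (R : ℝ → ℝ → ℝ)
    (hRc : ContinuousOn (fun p : ℝ × ℝ => R p.1 p.2)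
      (Set.Icc (0 : ℝ) (n : ℝ) ×ˢ Set.Icc (0 : ℝ) 1))
    (hRrange : ∀ t ∈ Set.Icc (0 : ℝ) (n : ℝ), ∀ h ∈ Set.Icc (0 : ℝ) 1,
      R t h ∈ Set.Icc (0 : ℝ) 1)
    (hRmt : ∀ h ∈ Set.Icc (0 : ℝ) 1,
      MonotoneOn (fun t => R t h) (Set.Icc (0 : ℝ) (n : ℝ)))
    (hRmh : ∀ t ∈ Set.Icc (0 : ℝ) (n : ℝ), MonotoneOn (R t) (Set.Icc (0 : ℝ) 1))
    (hR0 : ∀ t ∈ Set.Icc (0 : ℝ) (n : ℝ), R t 0 = 0)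
    (hR1 : ∀ t ∈ Set.Icc (0 : ℝ) (n : ℝ), R t 1 = 1)
    (hsupp : ∀ h ∈ Set.Icc (0 : ℝ) 1,
      ({t ∈ Set.Icc (0 : ℝ) (n : ℝ) | 0 < R t h ∧ R t h < 1}).OrdConnected ∧
      ∀ s ∈ {t ∈ Set.Icc (0 : ℝ) (n : ℝ) | 0 < R t h ∧ R t h < 1},
        ∀ t ∈ {t ∈ Set.Icc (0 : ℝ) (n : ℝ) | 0 < R t h ∧ R t h < 1},
          |t - s| ≤ 1 / (4 * n))
    (α : ℝ → ℝ) (hαc : ContinuousOn α (Set.Icc (0 : ℝ) (n : ℝ)))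
    (hαm : MonotoneOn α (Set.Icc (0 : ℝ) (n : ℝ)))
    (hαr : ∀ t ∈ Set.Icc (0 : ℝ) (n : ℝ), α t ∈ Set.Icc (0 : ℝ) 1)
    (hα0 : α 0 = 0) (hα1 : α n = 1) :
    ∃ c d : ℝ, d - c ≤ 1 / (4 * n) ∧
      ∀ t ∈ Set.Icc (0 : ℝ) (n : ℝ), 0 < R t (α t) → R t (α t) < 1 →
        t ∈ Set.Icc c d := by
  set S : Set ℝ := {t | t ∈ Set.Icc (0 : ℝ) (n : ℝ) ∧ 0 < R t (α t) ∧ R t (α t) < 1}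
    with hS
  have key : ∀ s ∈ S, ∀ t ∈ S, t - s ≤ 1 / (4 * n) := by
    intro s hs t ht
    rcases le_or_gt t s with h | h
    · have : (0:ℝ) ≤ 1 / (4 * n) := by positivity
      linarith
    · obtain ⟨hsI, hs0, hs1⟩ := hs
      obtain ⟨htI, ht0, ht1⟩ := ht
      have hαs := hαr s hsI
      have hαt := hαr t htI
      have hα_le : α s ≤ α t := hαm hsI htI h.le
      have hsmem : s ∈ {u ∈ Set.Icc (0 : ℝ) (n : ℝ) | 0 < R u (α s) ∧ R u (α s) < 1} :=
        ⟨hsI, hs0, hs1⟩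
      have htmem : t ∈ {u ∈ Set.Icc (0 : ℝ) (n : ℝ) | 0 < R u (α s) ∧ R u (α s) < 1} := by
        refine ⟨htI, ?_, ?_⟩
        · have := hRmt (α s) hαs hsI htI h.le
          simpa using lt_of_lt_of_le hs0 this
        · have := hRmh t htI hαs hαt hα_le
          exact lt_of_le_of_lt this ht1
      have := (hsupp (α s) hαs).2 s hsmem t htmem
      calc t - s ≤ |t - s| := le_abs_self _
        _ ≤ 1 / (4 * n) := this
  refine ⟨sInf S, sInf S + 1 / (4 * n), by linarith, ?_⟩
  intro t htI ht0 ht1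
  have htS : t ∈ S := ⟨htI, ht0, ht1⟩
  have hbdd : BddBelow S := ⟨0, fun u hu => hu.1.1⟩
  constructor
  · exact csInf_le hbdd htS
  · have : t - 1 / (4 * n) ≤ sInf S := by
      apply le_csInf ⟨t, htS⟩
      intro s hsS
      have := key s hsS t htS
      linarith
    linarith
end

section
/- Let 𝐟 = (f^p)_{p∈T} be a finite family of continuous non-decreasing functions f^p : [a,b] → [0,1] with f^p(a)=0, f^p(b)=1, and suppose there exist a = t₀ ≤ t₁ ≤ ⋯ ≤ t_l = b and for each p integers 1 ≤ beg(p) ≤ end(p) ≤ l with f^p ≡ 0 on [a, t_{beg(p)−1}] and f^p ≡ 1 on [t_{end(p)}, b]. For 1 ≤ i ≤ l define a_i = max{b_f^p : end(p) < i} (or a if no such p) and b_i = min{a_f^p : beg(p) > i} (or b if no such p), where (a_f^p, b_f^p) is the support of f^p. Then [a,b] = ⋃_{i=1}^l [a_i, b_i], i.e. a = a₁, b_l = b, and a_{i+1} ≤ b_i for all 1 ≤ i ≤ l−1. -/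
/-- Let `(f p)_{p ∈ T}` be a finite family of continuous non-decreasing
functions `[a,b] → [0,1]` with `f p a = 0`, `f p b = 1`, together with stages
`a = t 0 ≤ t 1 ≤ ⋯ ≤ t l = b` and `1 ≤ beg p ≤ end p ≤ l` such that
`f p ≡ 0` on `[a, t (beg p − 1)]` and `f p ≡ 1` on `[t (end p), b]`.
With `a_f p = sup (f p)⁻¹(0)`, `b_f p = inf (f p)⁻¹(1)` and
`aᵢ = max {b_f p : end p < i}` (or `a`), `bᵢ = min {a_f p : beg p > i}`
(or `b`), one has `[a,b] = ⋃_{i=1}^l [aᵢ, bᵢ]`. -/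
theorem progress_function_intervals_cover {T : Type*} [Fintype T]
    (a b : ℝ) (hab : a < b) (l : ℕ) (hl : 0 < l) (f : T → ℝ → ℝ)
    (hc : ∀ p, ContinuousOn (f p) (Set.Icc a b))
    (hm : ∀ p, MonotoneOn (f p) (Set.Icc a b))
    (hr : ∀ p, ∀ s ∈ Set.Icc a b, f p s ∈ Set.Icc (0 : ℝ) 1)
    (h0 : ∀ p, f p a = 0) (h1 : ∀ p, f p b = 1)
    (t : ℕ → ℝ) (ht0 : t 0 = a) (htl : t l = b)
    (htm : ∀ i j : ℕ, i ≤ j → j ≤ l → t i ≤ t j)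
    (beg fin : T → ℕ)
    (hbeg : ∀ p, 1 ≤ beg p) (hbf : ∀ p, beg p ≤ fin p) (hfin : ∀ p, fin p ≤ l)
    (hzero : ∀ p, ∀ s ∈ Set.Icc a (t (beg p - 1)), f p s = 0)
    (hone : ∀ p, ∀ s ∈ Set.Icc (t (fin p)) b, f p s = 1) :
    ∀ af bf : T → ℝ, ∀ aa bb : ℕ → ℝ,
      (af = fun p => sSup {s ∈ Set.Icc a b | f p s = 0}) →
      (bf = fun p => sInf {s ∈ Set.Icc a b | f p s = 1}) →
      (aa = fun i => sSup (insert a {x | ∃ p, fin p < i ∧ x = bf p})) →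
      (bb = fun i => sInf (insert b {x | ∃ p, i < beg p ∧ x = af p})) →
      Set.Icc a b = ⋃ i ∈ Finset.Icc 1 l, Set.Icc (aa i) (bb i) := by
  intro af bf aa bb haf hbfdef haa hbb
  subst haf hbfdef haa hbb
  set af : T → ℝ := fun p => sSup {s ∈ Set.Icc a b | f p s = 0} with haf
  set bf : T → ℝ := fun p => sInf {s ∈ Set.Icc a b | f p s = 1} with hbfdef
  set aa : ℕ → ℝ := fun i => sSup (insert a {x | ∃ p, fin p < i ∧ x = bf p}) with haa
  set bb : ℕ → ℝ := fun i => sInf (insert b {x | ∃ p, i < beg p ∧ x = af p}) with hbb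
  -- basic facts about af, bf
  have hZbdd : ∀ p, BddAbove {s ∈ Set.Icc a b | f p s = 0} := fun p =>
    BddAbove.mono (fun x hx => hx.1) bddAbove_Icc
  have hObdd : ∀ p, BddBelow {s ∈ Set.Icc a b | f p s = 1} := fun p =>
    BddBelow.mono (fun x hx => hx.1) bddBelow_Icc
  have hZne : ∀ p, ({s ∈ Set.Icc a b | f p s = 0}).Nonempty := fun p =>
    ⟨a, ⟨le_refl a, hab.le⟩, h0 p⟩
  have hOne : ∀ p, ({s ∈ Set.Icc a b | f p s = 1}).Nonempty := fun p =>
    ⟨b, ⟨hab.le, le_refl b⟩, h1 p⟩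
  have haf_le_b : ∀ p, af p ≤ b := fun p =>
    csSup_le (hZne p) (fun x hx => hx.1.2)
  have ha_le_bf : ∀ p, a ≤ bf p := fun p =>
    le_csInf (hOne p) (fun x hx => hx.1.1)
  have htmem : ∀ i, i ≤ l → t i ∈ Set.Icc a b := fun i hi =>
    ⟨ht0 ▸ htm 0 i (Nat.zero_le i) hi, htl ▸ htm i l hi le_rfl⟩
  have haf_ge : ∀ p, t (beg p - 1) ≤ af p := by
    intro p
    have hle : beg p - 1 ≤ l := le_trans (le_trans (Nat.sub_le _ _) (hbf p)) (hfin p)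
    refine le_csSup (hZbdd p) ⟨htmem _ hle, ?_⟩
    exact hzero p _ ⟨(htmem _ hle).1, le_rfl⟩
  have hbf_le : ∀ p, bf p ≤ t (fin p) := by
    intro p
    refine csInf_le (hObdd p) ⟨htmem _ (hfin p), ?_⟩
    exact hone p _ ⟨le_rfl, (htmem _ (hfin p)).2⟩
  -- finiteness of the aa/bb index sets
  have hAfin : ∀ i, ({x | ∃ p, fin p < i ∧ x = bf p} : Set ℝ).Finite := by
    intro i
    have : {x | ∃ p, fin p < i ∧ x = bf p} = bf '' {p | fin p < i} := by
      ext x; simp [eq_comm, Set.mem_image]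
    rw [this]; exact (Set.toFinite _).image _
  have hBfin : ∀ i, ({x | ∃ p, i < beg p ∧ x = af p} : Set ℝ).Finite := by
    intro i
    have : {x | ∃ p, i < beg p ∧ x = af p} = af '' {p | i < beg p} := by
      ext x; simp [eq_comm, Set.mem_image]
    rw [this]; exact (Set.toFinite _).image _
  have ha_le_aa : ∀ i, a ≤ aa i := fun i =>
    le_csSup ((hAfin i).insert a).bddAbove (Set.mem_insert a _)
  have hbb_le_b : ∀ i, bb i ≤ b := fun i =>
    csInf_le ((hBfin i).insert b).bddBelow (Set.mem_insert b _)
  have haa_le : ∀ i, i ≤ l → aa (i + 1) ≤ t i := by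
    intro i hi
    refine csSup_le (Set.insert_nonempty _ _) ?_
    rintro x (rfl | ⟨p, hp, rfl⟩)
    · exact ht0 ▸ htm 0 i (Nat.zero_le i) hi
    · exact le_trans (hbf_le p) (htm _ i (Nat.lt_succ_iff.mp hp) hi)
  have hbb_ge : ∀ i, i ≤ l → t i ≤ bb i := by
    intro i hi
    refine le_csInf (Set.insert_nonempty _ _) ?_
    rintro x (rfl | ⟨p, hp, rfl⟩)
    · exact htl ▸ htm i l hi le_rfl
    · refine le_trans ?_ (haf_ge p)
      exact htm i (beg p - 1) (Nat.le_sub_one_of_lt hp)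
        (le_trans (Nat.sub_le _ _) (le_trans (hbf p) (hfin p)))
  have haa1 : aa 1 = a :=
    le_antisymm (by simpa [ht0] using haa_le 0 (Nat.zero_le l)) (ha_le_aa 1)
  have hbbl : bb l = b :=
    le_antisymm (hbb_le_b l) (by simpa [htl] using hbb_ge l le_rfl)
  ext x
  simp only [Set.mem_iUnion, Set.mem_Icc, Finset.mem_Icc, exists_prop]
  constructor
  · rintro ⟨hax, hxb⟩
    set S := (Finset.Icc 1 l).filter (fun j => aa j ≤ x) with hS
    have h1S : 1 ∈ S := by
      simp only [hS, Finset.mem_filter, Finset.mem_Icc]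
      exact ⟨⟨le_rfl, hl⟩, haa1 ▸ hax⟩
    have hSne : S.Nonempty := ⟨1, h1S⟩
    set i := S.max' hSne with hi
    have hiS : i ∈ S := S.max'_mem hSne
    simp only [hS, Finset.mem_filter, Finset.mem_Icc] at hiS
    refine ⟨i, ⟨hiS.1.1, hiS.1.2⟩, hiS.2, ?_⟩
    by_contra hxi
    push_neg at hxi
    have hil : i < l := by
      rcases lt_or_eq_of_le hiS.1.2 with h | h
      · exact h
      · exact absurd (h ▸ hbbl ▸ hxb) (not_le.mpr (h ▸ hxi))
    have : i + 1 ∈ S := by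
      simp only [hS, Finset.mem_filter, Finset.mem_Icc]
      refine ⟨⟨le_trans hiS.1.1 (Nat.le_succ i), hil⟩, ?_⟩
      exact le_trans (le_trans (haa_le i hil.le) (hbb_ge i hil.le)) hxi.le
    have := S.le_max' _ this
    omega
  · rintro ⟨i, ⟨hi1, hil⟩, hax, hxb⟩
    exact ⟨le_trans (ha_le_aa i) hax, le_trans hxb (hbb_le_b i)⟩
end
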